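/- (Minimal bound, counting form) Let 2 ≤ k ≤ n. If the number of k-dimensional subspaces of F_q^n is strictly greater than the number of (k−2)-dimensional subspaces of F_q^{n−2} multiplied by (q² − q + 1)^n, then there exists a k-dimensional linear code C ⊆ F_q^n that is minimal, i.e., every nonzero codeword c ∈ C has the property that each c' ∈ C with supp(c') ⊆ supp(c) is a scalar multiple of c. -/

import Mathlib

/-- The support of a vector, as a finset of coordinates. -/
def supp {n : ℕ} {F : Type} [Field F] [DecidableEq F] (c : Fin n → F) : Finset (Fin n) :=
  Finset.univ.filter (fun i => c i ≠ 0)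

/-!
If no `k`-dimensional code is minimal, every such code `U` contains a pair `(c, c')` with
`supp c' ⊆ supp c` spanning a plane `V ≤ U`. The code `U` is recovered from the pair together
with the `(k - 2)`-dimensional subspace `U / V` of `F^n / V ≅ F^(n-2)`, so the number of
`k`-dimensional codes is at most the number of such pairs, `(q² - q + 1)^n` (coordinatewise, all
of `F × F` except the `q - 1` pairs `(0, b)` with `b ≠ 0`), times the number of
`(k - 2)`-dimensional subspaces of `F^(n-2)`.
-/

open Module Submodule

theorem card_pairs_ne_zero_imp_ne_zero {F : Type*} [Zero F] [Fintype F] [DecidableEq F] :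
    Nat.card {x : F × F // x.2 ≠ 0 → x.1 ≠ 0} = Fintype.card F ^ 2 - Fintype.card F + 1 := by
  have hbad : ({x | ¬(x.2 ≠ 0 → x.1 ≠ 0)} : Finset (F × F)) = {0} ×ˢ Finset.univ.erase 0 := by
    ext ⟨a, b⟩
    simp only [Finset.mem_filter, Finset.mem_univ, true_and, Finset.mem_product,
      Finset.mem_singleton, Finset.mem_erase]
    grind
  have hsplit := Finset.card_filter_add_card_filter_not (s := Finset.univ)
    fun x : F × F => x.2 ≠ 0 → x.1 ≠ 0
  rw [hbad, Finset.card_product, Finset.card_erase_of_mem (Finset.mem_univ _), Finset.card_univ,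
    Finset.card_univ, Fintype.card_prod, Finset.card_singleton, one_mul] at hsplit
  rw [Nat.card_eq_fintype_card, Fintype.card_subtype, Nat.pow_two]
  have := Nat.le_mul_self (Fintype.card F)
  have : 0 < Fintype.card F := Fintype.card_pos
  omega

theorem card_support_nested_pairs {ι F : Type*} [Fintype ι] [Zero F] [Fintype F] [DecidableEq F] :
    Nat.card {p : (ι → F) × (ι → F) // ∀ i, p.2 i ≠ 0 → p.1 i ≠ 0} =
      (Fintype.card F ^ 2 - Fintype.card F + 1) ^ Fintype.card ι := by
  rw [← card_pairs_ne_zero_imp_ne_zero, ← Nat.card_eq_fintype_card (α := ι), ← Nat.card_fun]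
  exact Nat.card_congr <|
    ((Equiv.arrowProdEquivProdArrow ι (fun _ => F) (fun _ => F)).symm.subtypeEquiv
      fun _ => Iff.rfl).trans (Equiv.subtypePiEquivPi (p := fun _ x => x.2 ≠ 0 → x.1 ≠ 0))

theorem Nat.card_le_card_mul_of_card_fiber_le {α β : Type*} [Finite α] [Finite β] (f : α → β)
    {m : ℕ} (h : ∀ a, Nat.card {a' // f a' = f a} ≤ m) : Nat.card α ≤ Nat.card β * m := by
  have := Fintype.ofFinite β
  calc Nat.card α = Nat.card (Σ b, {a // f a = b}) :=
        Nat.card_congr (Equiv.sigmaFiberEquiv f).symm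
    _ = ∑ b, Nat.card {a // f a = b} := Nat.card_sigma
    _ ≤ ∑ _b : β, m := Finset.sum_le_sum fun b _ => by
        rcases isEmpty_or_nonempty {a // f a = b} with hb | ⟨a, rfl⟩
        · simp
        · exact h a
    _ = Nat.card β * m := by simp

theorem finrank_span_pair_eq_two {K V : Type*} [DivisionRing K] [AddCommGroup V] [Module K V]
    {x y : V} (hx : x ≠ 0) (hy : ∀ a : K, y ≠ a • x) : finrank K (span K {x, y}) = 2 := by
  have hli := (LinearIndependent.pair_iff' hx).mpr fun a h => hy a h.symm
  rw [← Matrix.range_cons_cons_empty x y ![], finrank_span_eq_card hli, Fintype.card_fin]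

theorem Submodule.finrank_map_mkQ_add_finrank {K M : Type*} [DivisionRing K] [AddCommGroup M]
    [Module K M] {V U : Submodule K M} [FiniteDimensional K U] (hVU : V ≤ U) :
    finrank K (U.map V.mkQ) + finrank K V = finrank K U := by
  have h := LinearMap.finrank_range_add_finrank_ker (V.mkQ ∘ₗ U.subtype)
  rwa [LinearMap.range_comp, range_subtype, LinearMap.ker_comp, ker_mkQ,
    (comapSubtypeEquivOfLe hVU).finrank_eq] at h

theorem card_submodules_ge_le {K M N : Type*} [DivisionRing K] [AddCommGroup M] [Module K M]
    [FiniteDimensional K M] [AddCommGroup N] [Module K N] [Finite (Submodule K N)]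
    (V : Submodule K M) (e : (M ⧸ V) ≃ₗ[K] N) (k : ℕ) :
    Nat.card {U : Submodule K M // finrank K U = k ∧ V ≤ U} ≤
      Nat.card {W : Submodule K N // finrank K W = k - finrank K V} := by
  refine Nat.card_le_card_of_injective
    (fun U => ⟨(U.1.map V.mkQ).map e.toLinearMap, ?_⟩) fun U₁ U₂ h => Subtype.ext ?_
  · have := finrank_map_mkQ_add_finrank U.2.2
    rw [e.finrank_map_eq]
    omega
  · have h' := congrArg (comap V.mkQ)
      (map_injective_of_injective e.injective (congrArg Subtype.val h))
    rwa [comap_map_mkQ, comap_map_mkQ, sup_eq_right.mpr U₁.2.2, sup_eq_right.mpr U₂.2.2] at h'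

theorem card_submodules_pi_ge_le {K : Type*} [DivisionRing K] [Finite K] {n : ℕ}
    (V : Submodule K (Fin n → K)) (k : ℕ) :
    Nat.card {U : Submodule K (Fin n → K) // finrank K U = k ∧ V ≤ U} ≤
      Nat.card {W : Submodule K (Fin (n - finrank K V) → K) // finrank K W = k - finrank K V} := by
  obtain ⟨e⟩ : Nonempty (((Fin n → K) ⧸ V) ≃ₗ[K] (Fin (n - finrank K V) → K)) :=
    FiniteDimensional.nonempty_linearEquiv_of_finrank_eq (by simp [finrank_quotient])
  exact card_submodules_ge_le V e k

def IsMinimalCode {n : ℕ} {F : Type} [Field F] [DecidableEq F] (C : Submodule F (Fin n → F)) :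
    Prop :=
  ∀ c ∈ C, c ≠ 0 → ∀ c' ∈ C, supp c' ⊆ supp c → ∃ lam : F, c' = lam • c

section Codes

variable {n : ℕ} {F : Type} [Field F] [DecidableEq F]

theorem exists_nested_pair_of_not_isMinimalCode {C : Submodule F (Fin n → F)}
    (hC : ¬IsMinimalCode C) :
    ∃ p : {p : (Fin n → F) × (Fin n → F) // ∀ i, p.2 i ≠ 0 → p.1 i ≠ 0},
      span F {p.1.1, p.1.2} ≤ C ∧ finrank F (span F {p.1.1, p.1.2}) = 2 := by
  simp only [IsMinimalCode, not_forall, not_exists] at hC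
  obtain ⟨c, hc, hc0, c', hc', hsupp, hmul⟩ := hC
  refine ⟨⟨(c, c'), fun i hi => ?_⟩, span_le.2 (Set.insert_subset_iff.2 ⟨hc, by simpa⟩),
    finrank_span_pair_eq_two hc0 hmul⟩
  simpa [supp] using hsupp (by simpa [supp] using hi)

theorem card_codes_le_of_forall_not_isMinimalCode [Fintype F] {k : ℕ}
    (h : ∀ C : Submodule F (Fin n → F), finrank F C = k → ¬IsMinimalCode C) :
    Nat.card {U : Submodule F (Fin n → F) // finrank F U = k} ≤
      Nat.card {U : Submodule F (Fin (n - 2) → F) // finrank F U = k - 2} *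
        (Fintype.card F ^ 2 - Fintype.card F + 1) ^ n := by
  choose pair hle hrank using fun U : {U : Submodule F (Fin n → F) // finrank F U = k} =>
    exists_nested_pair_of_not_isMinimalCode (h U.1 U.2)
  have hfiber : ∀ U, Nat.card {U' // pair U' = pair U} ≤
      Nat.card {W : Submodule F (Fin (n - 2) → F) // finrank F W = k - 2} := by
    intro U
    have hV := card_submodules_pi_ge_le (span F {(pair U).1.1, (pair U).1.2}) k
    rw [hrank U] at hV
    have hVle : ∀ U' : {U' // pair U' = pair U},
        span F {(pair U).1.1, (pair U).1.2} ≤ U'.1.1 := fun ⟨U', hU'⟩ => by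
      simpa only [hU'] using hle U'
    refine le_trans (Nat.card_le_card_of_injective (fun U' => ⟨U'.1.1, U'.1.2, hVle U'⟩)
      fun _ _ h => Subtype.ext <| Subtype.ext <| by simpa using h) hV
  have := Nat.card_le_card_mul_of_card_fiber_le pair hfiber
  rwa [card_support_nested_pairs, Fintype.card_fin, mul_comm] at this

end Codes

theorem exists_minimal_code_of_count_general {n k : ℕ} {F : Type} [Field F] [Fintype F]
    [DecidableEq F]
    (hcount :
      Nat.card {U : Submodule F (Fin (n - 2) → F) // Module.finrank F U = k - 2} *
          (Fintype.card F ^ 2 - Fintype.card F + 1) ^ n <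
        Nat.card {U : Submodule F (Fin n → F) // Module.finrank F U = k}) :
    ∃ C : Submodule F (Fin n → F), Module.finrank F C = k ∧
      ∀ c ∈ C, c ≠ 0 → ∀ c' ∈ C, supp c' ⊆ supp c → ∃ lam : F, c' = lam • c := by
  by_contra hmin
  simp only [not_exists, not_and] at hmin
  exact lt_irrefl _ (hcount.trans_le (card_codes_le_of_forall_not_isMinimalCode hmin))

/-- Minimal bound (counting form): if there are more `k`-dimensional subspaces of `F_q^n`
than `(q² - q + 1)^n` times the number of `(k-2)`-dimensional subspaces of `F_q^(n-2)`,
then some `k`-dimensional linear code of length `n` over `F_q` is minimal. -/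
theorem exists_minimal_code_of_count {n k : ℕ} {F : Type} [Field F] [Fintype F]
    [DecidableEq F] (hk2 : 2 ≤ k) (hkn : k ≤ n)
    (hcount :
      Nat.card {U : Submodule F (Fin (n - 2) → F) // Module.finrank F U = k - 2} *
          (Fintype.card F ^ 2 - Fintype.card F + 1) ^ n <
        Nat.card {U : Submodule F (Fin n → F) // Module.finrank F U = k}) :
    ∃ C : Submodule F (Fin n → F), Module.finrank F C = k ∧
      ∀ c ∈ C, c ≠ 0 → ∀ c' ∈ C, supp c' ⊆ supp c → ∃ lam : F, c' = lam • c :=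
  exists_minimal_code_of_count_general hcount
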